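/- Let F : ℝ^d → ℝ be differentiable with L_θ-Lipschitz gradient (L_θ > 0). Let T ≥ 1, let step-sizes η_t satisfy 0 < η_t ≤ 1/(4L_θ) for t = 0,…,T−1, and let sequences θ^0, …, θ^T ∈ ℝ^d and g̃^0, …, g̃^{T−1} ∈ ℝ^d satisfy θ^{t+1} = θ^t + η_t g̃^t. Suppose there is Δ ≥ 0 with ‖g̃^t − ∇F(θ^t)‖² ≤ Δ for all t = 0,…,T−1. Then (∑_{t=0}^{T−1} η_t ‖∇F(θ^t)‖²) / (∑_{t=0}^{T−1} η_t) ≤ 4(F(θ^T) − F(θ^0)) / (∑_{t=0}^{T−1} η_t) + 3Δ. -/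

import Mathlib

/-!
Along the line `s ↦ x + s • v`, the Lipschitz gradient gives the descent lemma
`F (x + v) - F x ≥ ⟪∇F x, v⟫ - L/2 ‖v‖²`. For a step `v = η • g` with `L η ≤ 1`, the polarization
identity `2 ⟪∇F x, g⟫ = ‖∇F x‖² + ‖g‖² - ‖g - ∇F x‖²` turns this into the per-step gain
`η/2 (‖∇F x‖² - ‖g - ∇F x‖²)`. Telescoping these gains and dividing by `∑ η_t` gives the claim
even with the constants 2 and 1 in place of 4 and 3.
-/

open RealInnerProductSpace

section

variable {E : Type*} [NormedAddCommGroup E] [InnerProductSpace ℝ E] [CompleteSpace E]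
  {F : E → ℝ} {L : ℝ}

theorem hasDerivAt_comp_add_smul (hF : Differentiable ℝ F) (x v : E) (s : ℝ) :
    HasDerivAt (fun s : ℝ => F (x + s • v)) ⟪gradient F (x + s • v), v⟫ s := by
  have hline : HasDerivAt (fun s : ℝ => x + s • v) v s := by
    simpa using ((hasDerivAt_id s).smul_const v).const_add x
  have h := (hF (x + s • v)).hasGradientAt.hasFDerivAt.comp_hasDerivAt s hline
  rwa [InnerProductSpace.toDual_apply_apply] at h

-- The descent lemma, in the form used for ascent.
theorem inner_gradient_sub_le_image_add_sub (hF : Differentiable ℝ F)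
    (hLip : ∀ x y, ‖gradient F x - gradient F y‖ ≤ L * ‖x - y‖) (x v : E) :
    ⟪gradient F x, v⟫ - L / 2 * ‖v‖ ^ 2 ≤ F (x + v) - F x := by
  set φ : ℝ → ℝ := fun s => F (x + s • v) - s * ⟪gradient F x, v⟫ + L / 2 * s ^ 2 * ‖v‖ ^ 2
  have hφ : ∀ s, HasDerivAt φ
      (⟪gradient F (x + s • v) - gradient F x, v⟫ + L * s * ‖v‖ ^ 2) s := by
    intro s
    refine (((hasDerivAt_comp_add_smul hF x v s).sub
      ((hasDerivAt_id s).mul_const _)).add (((hasDerivAt_pow 2 s).const_mul (L / 2)).mul_const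
        (‖v‖ ^ 2))).congr_deriv ?_
    rw [inner_sub_left]; simp only [Nat.cast_ofNat]; ring
  have hφ_nonneg : ∀ s, 0 ≤ s →
      0 ≤ ⟪gradient F (x + s • v) - gradient F x, v⟫ + L * s * ‖v‖ ^ 2 := by
    intro s hs
    have h := (abs_le.mp ((abs_real_inner_le_norm _ _).trans
      (mul_le_mul_of_nonneg_right (hLip (x + s • v) x) (norm_nonneg v)))).1
    rw [add_sub_cancel_left, norm_smul, Real.norm_of_nonneg hs] at h
    nlinarith
  have hmono : MonotoneOn φ (Set.Ici 0) :=
    monotoneOn_of_hasDerivWithinAt_nonneg (convex_Ici 0)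
      (fun s _ => (hφ s).continuousAt.continuousWithinAt)
      (fun s _ => (hφ s).hasDerivWithinAt)
      (fun s hs => hφ_nonneg s (interior_subset hs))
  have := hmono Set.self_mem_Ici (Set.mem_Ici.mpr zero_le_one) zero_le_one
  simp only [φ, zero_smul, add_zero, one_smul, zero_mul, one_mul] at this
  linarith

theorem le_image_add_smul_sub_of_inexact_gradient (hF : Differentiable ℝ F)
    (hLip : ∀ x y, ‖gradient F x - gradient F y‖ ≤ L * ‖x - y‖) {η : ℝ} (hη : 0 ≤ η)
    (hηL : L * η ≤ 1) (x g : E) :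
    η / 2 * (‖gradient F x‖ ^ 2 - ‖g - gradient F x‖ ^ 2) ≤ F (x + η • g) - F x := by
  have hdesc := inner_gradient_sub_le_image_add_sub hF hLip x (η • g)
  rw [real_inner_smul_right, norm_smul, Real.norm_of_nonneg hη] at hdesc
  have hpolar := norm_sub_sq_real g (gradient F x)
  rw [real_inner_comm] at hpolar
  nlinarith [mul_le_mul_of_nonneg_right hηL (mul_nonneg hη (sq_nonneg ‖g‖))]

end

theorem weighted_mean_le_of_forall_mul_sub_le {T : ℕ} {η a f : ℕ → ℝ} {c k : ℝ}
    (hS : 0 < ∑ t ∈ Finset.range T, η t)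
    (hstep : ∀ t < T, η t * (a t - c) ≤ k * (f (t + 1) - f t)) :
    (∑ t ∈ Finset.range T, η t * a t) / (∑ t ∈ Finset.range T, η t) ≤
      k * (f T - f 0) / (∑ t ∈ Finset.range T, η t) + c := by
  have hsum : ∑ t ∈ Finset.range T, η t * (a t - c) ≤ k * (f T - f 0) := by
    rw [← Finset.sum_range_sub, Finset.mul_sum]
    exact Finset.sum_le_sum fun t ht => hstep t (Finset.mem_range.mp ht)
  simp only [mul_sub, Finset.sum_sub_distrib, ← Finset.sum_mul] at hsum
  rw [div_add' _ _ _ hS.ne', div_le_div_iff_of_pos_right hS]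
  linarith

theorem stmt5_general {d : ℕ} (F : EuclideanSpace ℝ (Fin d) → ℝ) (Lθ : ℝ) (hLθ : 0 < Lθ)
    (hF : Differentiable ℝ F)
    (hLip : ∀ x y, ‖gradient F x - gradient F y‖ ≤ Lθ * ‖x - y‖)
    (T : ℕ) (hT : 1 ≤ T)
    (η : ℕ → ℝ) (hη : ∀ t < T, 0 < η t) (hη' : ∀ t < T, η t ≤ 1 / (4 * Lθ))
    (θ : ℕ → EuclideanSpace ℝ (Fin d)) (gt : ℕ → EuclideanSpace ℝ (Fin d))
    (hupd : ∀ t < T, θ (t + 1) = θ t + η t • gt t)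
    (Δ : ℝ)
    (herr : ∀ t < T, ‖gt t - gradient F (θ t)‖ ^ 2 ≤ Δ) :
    (∑ t ∈ Finset.range T, η t * ‖gradient F (θ t)‖ ^ 2) / (∑ t ∈ Finset.range T, η t) ≤
      4 * (F (θ T) - F (θ 0)) / (∑ t ∈ Finset.range T, η t) + 3 * Δ := by
  have hS : 0 < ∑ t ∈ Finset.range T, η t :=
    Finset.sum_pos (fun t ht => hη t (Finset.mem_range.mp ht))
      (Finset.nonempty_range_iff.mpr (by omega))
  refine weighted_mean_le_of_forall_mul_sub_le (a := fun t => ‖gradient F (θ t)‖ ^ 2)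
    (f := fun t => F (θ t)) hS fun t ht => ?_
  have hηL : Lθ * η t ≤ 1 := by
    have := (le_div_iff₀ (by positivity)).mp (hη' t ht)
    linarith
  have hstep := le_image_add_smul_sub_of_inexact_gradient hF hLip (hη t ht).le hηL (θ t) (gt t)
  rw [← hupd t ht] at hstep
  nlinarith [hη t ht, herr t ht, mul_nonneg (hη t ht).le (sq_nonneg ‖gradient F (θ t)‖),
    mul_nonneg (hη t ht).le (sq_nonneg ‖gt t - gradient F (θ t)‖)]

/-- Deterministic content of Theorem 1: gradient ascent with inexact gradients
`g̃^t` (each with squared error at most `Δ`) and step-sizes `0 < η_t ≤ 1/(4Lθ)`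
converges to approximate stationarity. -/
theorem stmt5 {d : ℕ} (F : EuclideanSpace ℝ (Fin d) → ℝ) (Lθ : ℝ) (hLθ : 0 < Lθ)
    (hF : Differentiable ℝ F)
    (hLip : ∀ x y, ‖gradient F x - gradient F y‖ ≤ Lθ * ‖x - y‖)
    (T : ℕ) (hT : 1 ≤ T)
    (η : ℕ → ℝ) (hη : ∀ t < T, 0 < η t) (hη' : ∀ t < T, η t ≤ 1 / (4 * Lθ))
    (θ : ℕ → EuclideanSpace ℝ (Fin d)) (gt : ℕ → EuclideanSpace ℝ (Fin d))
    (hupd : ∀ t < T, θ (t + 1) = θ t + η t • gt t)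
    (Δ : ℝ) (hΔ : 0 ≤ Δ)
    (herr : ∀ t < T, ‖gt t - gradient F (θ t)‖ ^ 2 ≤ Δ) :
    (∑ t ∈ Finset.range T, η t * ‖gradient F (θ t)‖ ^ 2) / (∑ t ∈ Finset.range T, η t) ≤
      4 * (F (θ T) - F (θ 0)) / (∑ t ∈ Finset.range T, η t) + 3 * Δ :=
  stmt5_general F Lθ hLθ hF hLip T hT η hη hη' θ gt hupd Δ herr
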